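/- arXiv:math/9805150 — 2 statements merged into one kernel-verified Lean document; each statement's English description precedes it below -/
import Mathlib

section
/- Let ν(j) denote the least N such that every regressive coloring of the 2-element subsets of {1,2,...,N} admits a min-homogeneous subset of size j. Then for every integer k > 2, ν(4k² + k + 1) > f_k(4k²) − 1. -/
/-!
For `4k² ≤ m < n < f k (4k²)`, colour `{m, n}` by `l * k + d`, where `d < k` is the largest level
with `f d m ≤ n` and `l < ⌊√m⌋/2` the largest number of steps with `(f d)^[l] m ≤ n`; as
`l * k + d < (⌊√m⌋/2)² ≤ m`, this is regressive (pairs with `m < 4k²` get colour `0`). In a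
min-homogeneous set, the elements `b ≥ 4k²` below its maximum `t` reach `t` at strictly
decreasing levels, so there are at most `k` elements `≥ 4k²`, and at most `4k² + k` in all.

As `ν` is an infimum in `ℕ`, one also needs some `N` to work at all (else `ν = 0`): this is the
compactness argument, passing to a limit colouring of all pairs along a nonprincipal ultrafilter.
-/

/-- `f i` for `i ≥ 1`: `f 1 n = n + 1`, `f (i+1) n = (f i)^[⌊√n/2⌋] n`. -/
def f : ℕ → ℕ → ℕ
  | 0, n => n
  | 1, n => n + 1
  | i + 2, n => (f (i + 1))^[Nat.sqrt n / 2] n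

/-- `ν j` is the least `N` such that every regressive coloring of pairs from
`{1,…,N}` has a min-homogeneous subset of size `j`. -/
noncomputable def nu (j : ℕ) : ℕ :=
  sInf {N : ℕ | ∀ c : ℕ → ℕ → ℕ,
    (∀ m n, m ∈ Finset.Icc 1 N → n ∈ Finset.Icc 1 N → m < n → c m n < m) →
    ∃ B : Finset ℕ, B ⊆ Finset.Icc 1 N ∧ B.card = j ∧
      ∀ m n n', m ∈ B → n ∈ B → n' ∈ B → m < n → m < n' → c m n = c m n'}


lemma le_f : ∀ i n : ℕ, n ≤ f i n
  | 0, _ => le_rfl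
  | 1, n => n.le_succ
  | i + 2, n => Function.id_le_iterate_of_id_le (le_f (i + 1)) _ n

lemma f_succ {i : ℕ} (hi : i ≠ 0) (n : ℕ) : f (i + 1) n = (f i)^[Nat.sqrt n / 2] n := by
  obtain ⟨i, rfl⟩ := Nat.exists_eq_succ_of_ne_zero hi
  rfl

lemma f_mono : ∀ i : ℕ, Monotone (f i)
  | 0 => monotone_id
  | 1 => fun _ _ h => Nat.succ_le_succ h
  | i + 2 => fun a b h =>
      calc (f (i + 1))^[Nat.sqrt a / 2] a ≤ (f (i + 1))^[Nat.sqrt a / 2] b :=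
            (f_mono (i + 1)).iterate _ h
        _ ≤ (f (i + 1))^[Nat.sqrt b / 2] b :=
            Function.monotone_iterate_of_id_le (le_f (i + 1))
              (Nat.div_le_div_right (Nat.sqrt_le_sqrt h)) b

lemma f_le_f_succ {n : ℕ} (hn : 4 ≤ n) : ∀ i, f i n ≤ f (i + 1) n
  | 0 => n.le_succ
  | i + 1 => by
    have : 1 ≤ Nat.sqrt n / 2 := by
      have := Nat.le_sqrt.2 (show 2 * 2 ≤ n by omega)
      omega
    rw [f_succ i.succ_ne_zero]
    exact Function.monotone_iterate_of_id_le (le_f (i + 1)) this n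

lemma monotone_f_index {n : ℕ} (hn : 4 ≤ n) : Monotone (f · n) :=
  monotone_nat_of_le_succ (f_le_f_succ hn)

def fLevel (k m n : ℕ) : ℕ := Nat.findGreatest (fun i => f i m ≤ n) k

def fSteps (k m n : ℕ) : ℕ :=
  Nat.findGreatest (fun l => (f (fLevel k m n))^[l] m ≤ n) (Nat.sqrt m / 2)

def fColoring (k m n : ℕ) : ℕ :=
  if m < 4 * k ^ 2 then 0 else fSteps k m n * k + fLevel k m n

section fLevel

variable {k m n : ℕ}

lemma fLevel_le : fLevel k m n ≤ k := Nat.findGreatest_le k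

lemma one_le_fLevel (hk : 1 ≤ k) (hmn : m < n) : 1 ≤ fLevel k m n :=
  Nat.le_findGreatest (P := fun i => f i m ≤ n) hk hmn

lemma f_fLevel_le (hmn : m ≤ n) : f (fLevel k m n) m ≤ n :=
  Nat.findGreatest_spec (P := fun i => f i m ≤ n) k.zero_le hmn

lemma lt_f_of_fLevel_lt {i : ℕ} (hi : fLevel k m n < i) (hik : i ≤ k) : n < f i m :=
  not_le.1 (Nat.findGreatest_is_greatest (P := fun i => f i m ≤ n) hi hik)

lemma fLevel_lt (hmn : m ≤ n) (hn : n < f k m) : fLevel k m n < k :=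
  fLevel_le.lt_of_ne fun h => (f_fLevel_le (k := k) hmn).not_gt (by rwa [h])

lemma iterate_fSteps_le (hmn : m ≤ n) : (f (fLevel k m n))^[fSteps k m n] m ≤ n :=
  Nat.findGreatest_spec (P := fun l => (f (fLevel k m n))^[l] m ≤ n) (Nat.zero_le _) hmn

lemma fSteps_lt (hk : 1 ≤ k) (hmn : m < n) (hn : n < f k m) :
    fSteps k m n < Nat.sqrt m / 2 := by
  refine (Nat.findGreatest_le _).lt_of_ne fun h => ?_
  have hd := one_le_fLevel hk hmn
  have := lt_f_of_fLevel_lt (fLevel k m n).lt_succ_self (fLevel_lt hmn.le hn)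
  rw [f_succ (by omega), ← h] at this
  exact (iterate_fSteps_le hmn.le).not_gt this

lemma lt_iterate_fSteps_succ (hk : 1 ≤ k) (hmn : m < n) (hn : n < f k m) :
    n < (f (fLevel k m n))^[fSteps k m n + 1] m :=
  not_le.1 (Nat.findGreatest_is_greatest (P := fun l => (f (fLevel k m n))^[l] m ≤ n)
    (fSteps k m n).lt_succ_self (fSteps_lt hk hmn hn))

end fLevel

section fColoring

variable {k m n : ℕ}

lemma le_sqrt_div_two (hm : 4 * k ^ 2 ≤ m) : k ≤ Nat.sqrt m / 2 := by
  have : 2 * k ≤ Nat.sqrt m := Nat.le_sqrt.2 (by nlinarith)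
  omega

lemma fColoring_lt (hk : 1 ≤ k) (hm : 1 ≤ m) (hmn : m < n) (hn : n < f k (4 * k ^ 2)) :
    fColoring k m n < m := by
  unfold fColoring
  split_ifs with hsmall
  · exact hm
  push Not at hsmall
  have hn' : n < f k m := hn.trans_le (f_mono k hsmall)
  have hsteps := fSteps_lt hk hmn hn'
  have hlevel := fLevel_lt hmn.le hn'
  have hk' := le_sqrt_div_two hsmall
  calc fSteps k m n * k + fLevel k m n < (fSteps k m n + 1) * k := by nlinarith
    _ ≤ (Nat.sqrt m / 2) * (Nat.sqrt m / 2) := Nat.mul_le_mul hsteps hk'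
    _ ≤ Nat.sqrt m * Nat.sqrt m := Nat.mul_le_mul (Nat.div_le_self _ _) (Nat.div_le_self _ _)
    _ ≤ m := Nat.sqrt_le m

lemma eq_and_eq_of_mul_add_eq {q r q' r' k : ℕ} (hr : r < k) (hr' : r' < k)
    (h : q * k + r = q' * k + r') : q = q' ∧ r = r' := by
  have hk : 0 < k := by omega
  have h1 := (Nat.div_mod_unique (a := q * k + r) (d := q) (c := r) hk).2 ⟨by ring, hr⟩
  have h2 := (Nat.div_mod_unique (a := q' * k + r') (d := q') (c := r') hk).2 ⟨by ring, hr'⟩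
  rw [h] at h1
  exact ⟨h1.1.symm.trans h2.1, h1.2.symm.trans h2.2⟩

/-- Equal colours give a common level `d` and step count `l`, so `(f d)^[l] b ≤ b'` while
`t < (f d)^[l+1] b ≤ f d b'`: from `b'`, level `d` already overshoots `t`. -/
lemma fLevel_lt_fLevel_of_fColoring_eq {b b' t : ℕ} (hk : 1 ≤ k) (hb : 4 * k ^ 2 ≤ b)
    (hbb' : b < b') (hb't : b' < t) (ht : t < f k (4 * k ^ 2))
    (hcol : fColoring k b b' = fColoring k b t) : fLevel k b' t < fLevel k b t := by
  have hbt := hbb'.trans hb't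
  have hfb : f k (4 * k ^ 2) ≤ f k b := f_mono k hb
  have hb4 : 4 ≤ b' := by nlinarith
  unfold fColoring at hcol
  rw [if_neg (not_lt.2 hb), if_neg (not_lt.2 hb)] at hcol
  obtain ⟨hsteps, hlevel⟩ := eq_and_eq_of_mul_add_eq (fLevel_lt hbb'.le (by omega))
    (fLevel_lt hbt.le (by omega)) hcol
  set d := fLevel k b t
  have hreach : (f d)^[fSteps k b t] b ≤ b' := hsteps ▸ hlevel ▸ iterate_fSteps_le hbb'.le
  have hpast : t < f d b' := by
    have := lt_iterate_fSteps_succ hk hbt (by omega)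
    rw [Function.iterate_succ_apply'] at this
    exact this.trans_le (f_mono d hreach)
  by_contra! hle
  exact (f_fLevel_le hb't.le).not_gt (hpast.trans_le (monotone_f_index hb4 hle))

end fColoring

def IsRegressiveOn (c : ℕ → ℕ → ℕ) (N : ℕ) : Prop :=
  ∀ m n, m ∈ Finset.Icc 1 N → n ∈ Finset.Icc 1 N → m < n → c m n < m

def IsMinHomogeneous (c : ℕ → ℕ → ℕ) (B : Finset ℕ) : Prop :=
  ∀ m n n', m ∈ B → n ∈ B → n' ∈ B → m < n → m < n' → c m n = c m n'

def HasMinHomogeneous (j N : ℕ) : Prop :=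
  ∀ c, IsRegressiveOn c N → ∃ B ⊆ Finset.Icc 1 N, B.card = j ∧ IsMinHomogeneous c B

lemma IsMinHomogeneous.subset {c : ℕ → ℕ → ℕ} {B B' : Finset ℕ} (h : IsMinHomogeneous c B)
    (hB' : B' ⊆ B) : IsMinHomogeneous c B' :=
  fun m n n' hm hn hn' => h m n n' (hB' hm) (hB' hn) (hB' hn')

section cardBound

variable {k : ℕ} {B : Finset ℕ}

/-- All elements of `B` but its maximum `t` have distinct levels `fLevel k · t` in `[1, k)`. -/
lemma card_le_of_isMinHomogeneous_fColoring_of_ge (hk : 1 ≤ k)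
    (hB : ∀ b ∈ B, 4 * k ^ 2 ≤ b ∧ b < f k (4 * k ^ 2))
    (hhom : IsMinHomogeneous (fColoring k) B) : B.card ≤ k := by
  rcases B.eq_empty_or_nonempty with rfl | hne
  · simp
  set t := B.max' hne
  have ht : t < f k (4 * k ^ 2) := (hB t (B.max'_mem hne)).2
  have hlt : ∀ b ∈ B.erase t, b < t := fun b hb =>
    (B.le_max' b (Finset.mem_of_mem_erase hb)).lt_of_ne (Finset.ne_of_mem_erase hb)
  have hanti : StrictAntiOn (fLevel k · t) (B.erase t : Set ℕ) := by
    intro b hb b' hb' hbb'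
    have hbB := Finset.mem_of_mem_erase hb
    exact fLevel_lt_fLevel_of_fColoring_eq hk (hB b hbB).1 hbb' (hlt b' hb') ht
      (hhom b b' t hbB (Finset.mem_of_mem_erase hb') (B.max'_mem hne) hbb' (hlt b hb))
  have hmaps : Set.MapsTo (fLevel k · t) (B.erase t : Set ℕ) (Finset.Ico 1 k : Set ℕ) := by
    intro b hb
    have hbt := hlt b hb
    have hb4 := (hB b (Finset.mem_of_mem_erase hb)).1
    simp only [Finset.coe_Ico, Set.mem_Ico]
    exact ⟨one_le_fLevel hk hbt, fLevel_lt hbt.le (ht.trans_le (f_mono k hb4))⟩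
  have hcard := Finset.card_le_card_of_injOn _ hmaps hanti.injOn
  rw [Nat.card_Ico] at hcard
  have herase : (B.erase t).card + 1 = B.card := Finset.card_erase_add_one (B.max'_mem hne)
  omega

lemma card_le_of_isMinHomogeneous_fColoring (hk : 1 ≤ k) (hB : ∀ b ∈ B, b < f k (4 * k ^ 2))
    (hhom : IsMinHomogeneous (fColoring k) B) : B.card ≤ 4 * k ^ 2 + k := by
  rw [← B.card_filter_add_card_filter_not (· < 4 * k ^ 2)]
  gcongr
  · calc (B.filter (· < 4 * k ^ 2)).card ≤ (Finset.range (4 * k ^ 2)).card :=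
          Finset.card_le_card fun b hb => Finset.mem_range.2 (Finset.mem_filter.1 hb).2
      _ = 4 * k ^ 2 := Finset.card_range _
  · refine card_le_of_isMinHomogeneous_fColoring_of_ge hk (fun b hb => ?_)
      (hhom.subset (B.filter_subset _))
    obtain ⟨hbB, hb⟩ := Finset.mem_filter.1 hb
    exact ⟨not_lt.1 hb, hB b hbB⟩

lemma not_hasMinHomogeneous (hk : 1 ≤ k) {N : ℕ} (hN : N < f k (4 * k ^ 2)) :
    ¬ HasMinHomogeneous (4 * k ^ 2 + k + 1) N := by
  intro h
  obtain ⟨B, hBN, hcard, hhom⟩ := h (fColoring k) fun m n hm hn hmn =>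
    fColoring_lt hk (Finset.mem_Icc.1 hm).1 hmn ((Finset.mem_Icc.1 hn).2.trans_lt hN)
  have := card_le_of_isMinHomogeneous_fColoring hk
    (fun b hb => (Finset.mem_Icc.1 (hBN hb)).2.trans_lt hN) hhom
  omega

end cardBound

open Filter

namespace Ultrafilter

variable {α : Type*} {U : Ultrafilter α} {g : α → ℕ} {m : ℕ}

/-- The value that `g` takes `U`-almost everywhere; it exists as soon as `g` is `U`-eventually
bounded (junk value `0` otherwise). -/
noncomputable def natLimit (U : Ultrafilter α) (g : α → ℕ) : ℕ := sInf {v | ∀ᶠ x in U, g x = v}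

lemma exists_eventually_eq_of_eventually_lt : ∀ {m : ℕ}, (∀ᶠ x in U, g x < m) →
    ∃ v, ∀ᶠ x in U, g x = v
  | 0, h => by
    simp only [not_lt_zero, eventually_false_iff_eq_bot] at h
    exact (U.neBot.ne h).elim
  | m + 1, h => by
    have hsplit : ∀ᶠ x in U, g x < m ∨ g x = m := h.mono fun x hx => by omega
    rcases U.eventually_or.1 hsplit with h' | h'
    exacts [exists_eventually_eq_of_eventually_lt h', ⟨m, h'⟩]

lemma eventually_eq_natLimit (h : ∀ᶠ x in U, g x < m) : ∀ᶠ x in U, g x = U.natLimit g :=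
  Nat.sInf_mem (exists_eventually_eq_of_eventually_lt h)

lemma natLimit_lt (h : ∀ᶠ x in U, g x < m) : U.natLimit g < m := by
  obtain ⟨x, hx, hlt⟩ := ((eventually_eq_natLimit h).and h).exists
  exact hx ▸ hlt

end Ultrafilter

lemma exists_finset_subset_forall_lt_eq {U : Ultrafilter ℕ} (hU : (U : Filter ℕ) ≤ atTop)
    {c : ℕ → ℕ → ℕ} {v : ℕ → ℕ} (s : ℕ) {X : Set ℕ} (hX : X ∈ U)
    (hv : ∀ m ∈ X, ∀ᶠ n in U, c m n = v m) :
    ∃ B : Finset ℕ, ↑B ⊆ X ∧ B.card = s ∧ ∀ m ∈ B, ∀ n ∈ B, m < n → c m n = v m := by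
  induction s generalizing X with
  | zero => exact ⟨∅, by simp, rfl, by simp⟩
  | succ s ih =>
    obtain ⟨m, hm⟩ := Filter.nonempty_of_mem hX
    let X' := {n | n ∈ X ∧ m < n ∧ c m n = v m}
    have hX' : X' ∈ U := (show ∀ᶠ n in U, n ∈ X from hX).and
      (((eventually_gt_atTop m).filter_mono hU).and (hv m hm))
    obtain ⟨B, hBX', hcard, hBv⟩ := ih hX' fun n hn => hv n hn.1
    have hmB : ∀ n ∈ B, m < n := fun n hn => (hBX' hn).2.1
    refine ⟨insert m B, ?_, ?_, ?_⟩
    · exact Finset.coe_insert m B ▸ Set.insert_subset hm fun n hn => (hBX' hn).1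
    · rw [Finset.card_insert_of_notMem fun h => (hmB m h).false, hcard]
    · intro a ha b hb hab
      have hbB : b ∈ B := by
        rcases Finset.mem_insert.1 ha with rfl | ha
        · exact (Finset.mem_insert.1 hb).resolve_left hab.ne'
        · exact (Finset.mem_insert.1 hb).resolve_left ((hmB a ha).trans hab).ne'
      rcases Finset.mem_insert.1 ha with rfl | ha
      · exact (hBX' hbB).2.2
      · exact hBv a ha b hbB hab

/-- Counterexample colourings `cN N` have a limit colouring `c` along a nonprincipal ultrafilter
`U`; the limits `v m` of the colours `c m n` give sets `B` with `c m n = v m` for `m < n` in `B`,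
and `cN N` agrees with `c` on `B` for `U`-many `N`. -/
theorem exists_hasMinHomogeneous (j : ℕ) : ∃ N, HasMinHomogeneous j N := by
  by_contra! hbad
  have hcounter : ∀ N, ∃ c, IsRegressiveOn c N ∧
      ∀ B ⊆ Finset.Icc 1 N, B.card = j → ¬ IsMinHomogeneous c B := fun N => by
    have h := hbad N
    unfold HasMinHomogeneous at h
    push Not at h
    exact h
  choose cN hreg hnot using hcounter
  let U := hyperfilter ℕ
  have hU : (U : Filter ℕ) ≤ atTop := Nat.cofinite_eq_atTop ▸ hyperfilter_le_cofinite
  have hbdd : ∀ m n, 1 ≤ m → m < n → ∀ᶠ N in U, cN N m n < m := fun m n hm hmn =>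
    ((eventually_ge_atTop n).filter_mono hU).mono fun N hN =>
      hreg N m n (Finset.mem_Icc.2 ⟨hm, by omega⟩) (Finset.mem_Icc.2 ⟨by omega, hN⟩) hmn
  let c m n := U.natLimit fun N => cN N m n
  have hv : ∀ m ∈ Set.Ici 1, ∀ᶠ n in U, c m n = U.natLimit (c m) := fun m hm =>
    Ultrafilter.eventually_eq_natLimit (m := m) <| ((eventually_gt_atTop m).filter_mono hU).mono
      fun n hn => Ultrafilter.natLimit_lt (hbdd m n hm hn)
  obtain ⟨B, hB1, hcard, hBv⟩ :=
    exists_finset_subset_forall_lt_eq hU j (hU (Ici_mem_atTop 1)) hv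
  have hstage : ∀ᶠ N in U, (∀ b ∈ B, b ≤ N) ∧ ∀ m ∈ B, ∀ n ∈ B, m < n → cN N m n = c m n :=
    ((eventually_all_finset B).2 fun b _ => (eventually_ge_atTop b).filter_mono hU).and <|
      (eventually_all_finset B).2 fun m hm => (eventually_all_finset B).2 fun n _ =>
        eventually_imp_distrib_left.2 fun hmn =>
          Ultrafilter.eventually_eq_natLimit (hbdd m n (hB1 hm) hmn)
  obtain ⟨N, hle, heq⟩ := hstage.exists
  refine hnot N B (fun b hb => Finset.mem_Icc.2 ⟨hB1 hb, hle b hb⟩) hcard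
    fun m n n' hm hn hn' hmn hmn' => ?_
  rw [heq m hm n hn hmn, heq m hm n' hn' hmn', hBv m hm n hn hmn, hBv m hm n' hn' hmn']

theorem hasMinHomogeneous_nu (j : ℕ) : HasMinHomogeneous j (nu j) :=
  Nat.sInf_mem (exists_hasMinHomogeneous j)

theorem nu_lower_bound (k : ℕ) (hk : 2 < k) :
    f k (4 * k ^ 2) - 1 < nu (4 * k ^ 2 + k + 1) := by
  have hpos : 0 < f k (4 * k ^ 2) := (by positivity : 0 < 4 * k ^ 2).trans_le (le_f k _)
  by_contra! hle
  exact not_hasMinHomogeneous (k := k) (by omega) (by omega) (hasMinHomogeneous_nu _)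
end

section
/- For every integer k ≥ 14, A_{k−7}(4k²) ≤ f_k(4k²). -/
/-- Ackermann approximations: `A 1 n = n + 1`, `A (i+1) n = (A i)^[n] n`. -/
def A : ℕ → ℕ → ℕ
  | 0, n => n
  | 1, n => n + 1
  | i + 2, n => (A (i + 1))^[n] n

lemma le_iterate {g : ℕ → ℕ} (hg : ∀ x, x ≤ g x) (j x : ℕ) : x ≤ g^[j] x := by
  induction j with
  | zero => simp
  | succ j ih =>
    rw [Function.iterate_succ_apply']
    exact le_trans ih (hg _)

lemma iterate_le_iterate {g : ℕ → ℕ} (hg : ∀ x, x ≤ g x) {a b : ℕ} (h : a ≤ b) (x : ℕ) :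
    g^[a] x ≤ g^[b] x := by
  have hb : g^[b] x = g^[b - a] (g^[a] x) := by
    rw [← Function.iterate_add_apply]
    congr 1
    omega
  rw [hb]
  exact le_iterate hg _ _

lemma self_le_f : ∀ i n, n ≤ f i n
  | 0, n => le_refl _
  | 1, n => Nat.le_succ n
  | (i+2), n => le_iterate (fun x => self_le_f (i+1) x) _ _

lemma self_le_A : ∀ i n, n ≤ A i n
  | 0, n => le_refl _
  | 1, n => Nat.le_succ n
  | (i+2), n => le_iterate (fun x => self_le_A (i+1) x) _ _

lemma f1_iter (j x : ℕ) : (f 1)^[j] x = x + j := by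
  induction j with
  | zero => simp
  | succ j ih => rw [Function.iterate_succ_apply', ih]; rfl

lemma f2_eq (n : ℕ) : f 2 n = n + Nat.sqrt n / 2 := by
  show (f 1)^[Nat.sqrt n / 2] n = _
  exact f1_iter _ _

lemma f3_ge (n : ℕ) :
    n + (Nat.sqrt n / 2) * (Nat.sqrt n / 2) ≤ f 3 n := by
  set t := Nat.sqrt n / 2 with ht
  have key : ∀ j, n + j * t ≤ (f 2)^[j] n := by
    intro j
    induction j with
    | zero => simp
    | succ j ih =>
      rw [Function.iterate_succ_apply']
      set M := (f 2)^[j] n with hM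
      have hMn : n ≤ M := le_iterate (fun x => by rw [f2_eq]; omega) _ _
      have hsq : t ≤ Nat.sqrt M / 2 :=
        Nat.div_le_div_right (Nat.sqrt_le_sqrt hMn)
      rw [f2_eq, Nat.succ_mul]
      omega
  calc n + t * t ≤ (f 2)^[t] n := by rw [Nat.mul_comm]; exact key t
    _ = f 3 n := rfl

lemma f4_ge (n : ℕ) :
    n + (Nat.sqrt n / 2) * ((Nat.sqrt n / 2) * (Nat.sqrt n / 2)) ≤ f 4 n := by
  set t := Nat.sqrt n / 2 with ht
  have key : ∀ j, n + j * (t * t) ≤ (f 3)^[j] n := by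
    intro j
    induction j with
    | zero => simp
    | succ j ih =>
      rw [Function.iterate_succ_apply']
      set M := (f 3)^[j] n with hM
      have hMn : n ≤ M := le_iterate (self_le_f 3) _ _
      have hsq : t ≤ Nat.sqrt M / 2 :=
        Nat.div_le_div_right (Nat.sqrt_le_sqrt hMn)
      have h3 : M + (Nat.sqrt M / 2) * (Nat.sqrt M / 2) ≤ f 3 M := f3_ge M
      have : t * t ≤ (Nat.sqrt M / 2) * (Nat.sqrt M / 2) := Nat.mul_le_mul hsq hsq
      have hcomb := Nat.add_le_add ih this
      rw [Nat.succ_mul]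
      omega
  calc n + t * (t * t) ≤ (f 3)^[t] n := by
        have := key t
        omega
    _ = f 4 n := rfl

lemma cube_sqrt {n : ℕ} (hn : 256 ≤ n) :
    n ≤ (Nat.sqrt n / 2) * ((Nat.sqrt n / 2) * (Nat.sqrt n / 2)) := by
  set s := Nat.sqrt n with hs
  set t := s / 2 with htdef
  have h1 : 16 ≤ s := Nat.le_sqrt.mpr (by omega)
  have h2 : n < (s + 1) * (s + 1) := Nat.lt_succ_sqrt n
  have h3 : s ≤ 2 * t + 1 := by omega
  have h4 : 8 ≤ t := by omega
  nlinarith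

lemma f4_double {n : ℕ} (hn : 256 ≤ n) : 2 * n ≤ f 4 n := by
  have := f4_ge n
  have := cube_sqrt hn
  omega

lemma f5_ge_pow {m : ℕ} (hm : 256 ≤ m) (j : ℕ) : 2 ^ j * m ≤ (f 4)^[j] m := by
  induction j with
  | zero => simp
  | succ j ih =>
    rw [Function.iterate_succ_apply']
    set M := (f 4)^[j] m with hM
    have hMm : m ≤ M := le_iterate (self_le_f 4) _ _
    have hd : 2 * M ≤ f 4 M := f4_double (by omega)
    calc 2 ^ (j+1) * m = 2 * (2 ^ j * m) := by ring
      _ ≤ 2 * M := by omega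
      _ ≤ f 4 M := hd

lemma pow_lemma : ∀ t : ℕ, 14 ≤ t → 16 * (t + 1) ^ 2 ≤ 2 ^ t := by
  intro t ht
  induction t, ht using Nat.le_induction with
  | base => norm_num
  | succ t ht ih =>
    have : 16 * (t + 2) ^ 2 ≤ 2 * (16 * (t + 1) ^ 2) := by nlinarith
    calc 16 * (t + 1 + 1) ^ 2 ≤ 2 * (16 * (t + 1) ^ 2) := this
      _ ≤ 2 * 2 ^ t := by omega
      _ = 2 ^ (t + 1) := by ring

lemma f5_sq {m : ℕ} (hm : 784 ≤ m) : 4 * m ^ 2 ≤ f 5 m := by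
  set s := Nat.sqrt m with hs
  set t := s / 2 with htdef
  have h1 : 28 ≤ s := Nat.le_sqrt.mpr (by omega)
  have h2 : m < (s + 1) * (s + 1) := Nat.lt_succ_sqrt m
  have h3 : s ≤ 2 * t + 1 := by omega
  have h4 : 14 ≤ t := by omega
  have hmb : m ≤ 4 * t ^ 2 + 8 * t + 3 := by nlinarith
  have hp : 16 * (t + 1) ^ 2 ≤ 2 ^ t := pow_lemma t h4
  have h4m : 4 * m ≤ 2 ^ t := by nlinarith
  have h5 : 2 ^ t * m ≤ f 5 m := f5_ge_pow (by omega) t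
  calc 4 * m ^ 2 = (4 * m) * m := by ring
    _ ≤ 2 ^ t * m := Nat.mul_le_mul_right m h4m
    _ ≤ f 5 m := h5

lemma f_succ_ge {i : ℕ} (hi : 1 ≤ i) {m : ℕ} (hm : 4 ≤ m) : f i m ≤ f (i + 1) m := by
  obtain ⟨j, rfl⟩ : ∃ j, i = j + 1 := ⟨i - 1, by omega⟩
  show f (j + 1) m ≤ (f (j + 1))^[Nat.sqrt m / 2] m
  have hs : 2 ≤ Nat.sqrt m := Nat.le_sqrt.mpr (by omega)
  have ht : 1 ≤ Nat.sqrt m / 2 := by omega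
  calc f (j + 1) m = (f (j + 1))^[1] m := rfl
    _ ≤ (f (j + 1))^[Nat.sqrt m / 2] m := iterate_le_iterate (self_le_f _) ht m

lemma f5_le_f {m : ℕ} (hm : 4 ≤ m) : ∀ j, f 5 m ≤ f (5 + j) m := by
  intro j
  induction j with
  | zero => rfl
  | succ j ih => exact le_trans ih (f_succ_ge (by omega) hm)

lemma keyX : ∀ i, 1 ≤ i → ∀ n m, 784 ≤ n → 4 * n ^ 2 ≤ m →
    4 * (A i n) ^ 2 ≤ f (i + 6) m := by
  intro i hi
  induction i, hi using Nat.le_induction with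
  | base =>
    intro n m hn hm
    have hA : A 1 n = n + 1 := rfl
    have hm4 : 784 ≤ m := by nlinarith
    have h5 : 4 * m ^ 2 ≤ f 5 m := f5_sq hm4
    have h7 : f 5 m ≤ f 7 m := by
      have := f5_le_f (m := m) (by omega) 2
      simpa using this
    rw [hA]
    show 4 * (n + 1) ^ 2 ≤ f 7 m
    have h1 : 4 * (n + 1) ^ 2 ≤ 4 * m ^ 2 := by nlinarith
    exact le_trans h1 (le_trans h5 h7)
  | succ i hi ih =>
    intro n m hn hm
    obtain ⟨j, rfl⟩ : ∃ j, i = j + 1 := ⟨i - 1, by omega⟩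
    have hA : A (j + 2) n = (A (j + 1))^[n] n := rfl
    have hsm : 2 * n ≤ Nat.sqrt m := Nat.le_sqrt.mpr (by nlinarith)
    have ht : n ≤ Nat.sqrt m / 2 := by omega
    have inner : ∀ l, 4 * ((A (j + 1))^[l] n) ^ 2 ≤ (f (j + 7))^[l] m := by
      intro l
      induction l with
      | zero => simpa using hm
      | succ l ihl =>
        rw [Function.iterate_succ_apply', Function.iterate_succ_apply']
        have hN : 784 ≤ (A (j + 1))^[l] n :=
          le_trans hn (le_iterate (self_le_A _) l n)
        have := ih ((A (j + 1))^[l] n) ((f (j + 7))^[l] m) hN ihl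
        have hidx : j + 1 + 6 = j + 7 := by omega
        rw [hidx] at this
        exact this
    have hgoal : f (j + 1 + 1 + 6) m = (f (j + 7))^[Nat.sqrt m / 2] m := by
      have hidx : j + 1 + 1 + 6 = (j + 7) + 1 := by omega
      rw [hidx]
      rfl
    rw [hgoal]
    have hAeq : A (j + 1 + 1) n = (A (j + 1))^[n] n := rfl
    rw [hAeq]
    calc 4 * ((A (j + 1))^[n] n) ^ 2 ≤ (f (j + 7))^[n] m := inner n
      _ ≤ (f (j + 7))^[Nat.sqrt m / 2] m := iterate_le_iterate (self_le_f _) ht m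

theorem A_sub_seven_le_f (k : ℕ) (hk : 14 ≤ k) :
    A (k - 7) (4 * k ^ 2) ≤ f k (4 * k ^ 2) := by
  set n := 4 * k ^ 2 with hn
  have hn784 : 784 ≤ n := by rw [hn]; nlinarith
  have hsqrt : Nat.sqrt n = 2 * k := by
    have : n = (2 * k) * (2 * k) := by rw [hn]; ring
    rw [this, Nat.sqrt_eq]
  obtain ⟨j, hj⟩ : ∃ j, k = j + 2 := ⟨k - 2, by omega⟩
  have hfk : f k n = (f (j + 1))^[Nat.sqrt n / 2] n := by rw [hj]; rfl
  have htk : Nat.sqrt n / 2 = k := by rw [hsqrt]; omega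
  set m := f (j + 1) n with hm
  have hm5 : f 5 n ≤ m := by
    have := f5_le_f (m := n) (by omega) (j - 4)
    have hidx : 5 + (j - 4) = j + 1 := by omega
    rwa [hidx] at this
  have hmsq : 4 * n ^ 2 ≤ m := le_trans (f5_sq hn784) hm5
  have hX : 4 * (A (k - 7) n) ^ 2 ≤ f (k - 7 + 6) m :=
    keyX (k - 7) (by omega) n m hn784 hmsq
  have hidx2 : k - 7 + 6 = j + 1 := by omega
  rw [hidx2] at hX
  have hAn : 1 ≤ A (k - 7) n := le_trans (by omega) (self_le_A _ n)
  have hAle : A (k - 7) n ≤ 4 * (A (k - 7) n) ^ 2 := by nlinarith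
  have h2 : (f (j + 1))^[2] n = f (j + 1) m := by
    rw [Function.iterate_succ_apply', Function.iterate_one]
  have hit : (f (j + 1))^[2] n ≤ (f (j + 1))^[Nat.sqrt n / 2] n :=
    iterate_le_iterate (self_le_f _) (by omega) n
  calc A (k - 7) n ≤ 4 * (A (k - 7) n) ^ 2 := hAle
    _ ≤ f (j + 1) m := hX
    _ = (f (j + 1))^[2] n := h2.symm
    _ ≤ (f (j + 1))^[Nat.sqrt n / 2] n := hit
    _ = f k n := hfk.symm
end
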